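/- arXiv:1904.03432 — 4 statements merged into one kernel-verified Lean document; each statement's English description precedes it below -/
import Mathlib

section
/- For every τ in the upper half-plane with Im τ ≥ 2, one has |χ(τ) − q^{−1}| ≤ 4808 and |ξ(τ) − q^{−1}| ≤ 4782, where q = e^{2πiτ}. -/
open Complex

noncomputable section

/-- `sigma' k n = ∑_{d ∣ n} d^k`, the sum of the k-th powers of the positive divisors of n. -/
def sigma' (k n : ℕ) : ℕ := ∑ d ∈ n.divisors, d ^ k

/-- `qpar τ = e^{2πiτ}`. -/
def qpar (τ : ℂ) : ℂ := Complex.exp (2 * Real.pi * Complex.I * τ)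

/-- The quasimodular Eisenstein series `E₂(τ) = 1 - 24 ∑_{n≥1} σ₁(n) qⁿ`. -/
def E2 (τ : ℂ) : ℂ := 1 - 24 * ∑' n : ℕ, (sigma' 1 (n + 1) : ℂ) * qpar τ ^ (n + 1)

/-- The Eisenstein series `E₄(τ) = 1 + 240 ∑_{n≥1} σ₃(n) qⁿ`. -/
def E4 (τ : ℂ) : ℂ := 1 + 240 * ∑' n : ℕ, (sigma' 3 (n + 1) : ℂ) * qpar τ ^ (n + 1)

/-- The Eisenstein series `E₆(τ) = 1 - 504 ∑_{n≥1} σ₅(n) qⁿ`. -/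
def E6 (τ : ℂ) : ℂ := 1 - 504 * ∑' n : ℕ, (sigma' 5 (n + 1) : ℂ) * qpar τ ^ (n + 1)

/-- The modular discriminant `Δ = (E₄³ - E₆²)/1728`. -/
def Δ' (τ : ℂ) : ℂ := (E4 τ ^ 3 - E6 τ ^ 2) / 1728

/-- The modular j-invariant `j = E₄³/Δ`. -/
def jinv (τ : ℂ) : ℂ := E4 τ ^ 3 / Δ' τ

/-- `χ = E₂E₄E₆/Δ`. -/
def χ' (τ : ℂ) : ℂ := E2 τ * E4 τ * E6 τ / Δ' τ

/-- `ξ = E₄E₆/Δ`. -/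
def ξ' (τ : ℂ) : ℂ := E4 τ * E6 τ / Δ' τ

/-- The almost holomorphic modular function `χ*(τ) = χ(τ) - (3/(π Im τ)) ξ(τ)`. -/
def χstar (τ : ℂ) : ℂ := χ' τ - (3 / (Real.pi * τ.im) : ℝ) * ξ' τ

/-- `τ` lies in the upper half-plane and satisfies `aτ² + bτ + c = 0` where
`a > 0` and `gcd(a,b,c) = 1`. -/
def QuadPoint (τ : ℂ) (a b c : ℤ) : Prop :=
  0 < τ.im ∧ 0 < a ∧ Int.gcd (Int.gcd a b) c = 1 ∧
    (a : ℂ) * τ ^ 2 + (b : ℂ) * τ + (c : ℂ) = 0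

/-- `τ` is a quadratic point of the upper half-plane. -/
def IsQuadratic (τ : ℂ) : Prop := ∃ a b c : ℤ, QuadPoint τ a b c

/-- `τ` is a quadratic point of discriminant `D = b² - 4ac`. -/
def HasDisc (τ : ℂ) (D : ℤ) : Prop :=
  ∃ a b c : ℤ, QuadPoint τ a b c ∧ D = b ^ 2 - 4 * a * c

/-- Membership in the closed standard fundamental domain
`F = {z ∈ ℍ : |z| ≥ 1, -1/2 ≤ Re z ≤ 1/2}`. -/
def inF (τ : ℂ) : Prop :=
  0 < τ.im ∧ 1 ≤ ‖τ‖ ∧ -(1 / 2) ≤ τ.re ∧ τ.re ≤ 1 / 2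

/-- `τ` and `τ'` lie in the same `SL₂(ℤ)`-orbit under Möbius transformations. -/
def MoebiusEquiv (τ τ' : ℂ) : Prop :=
  ∃ γ : Matrix.SpecialLinearGroup (Fin 2) ℤ,
    τ' = ((γ.1 0 0 : ℂ) * τ + (γ.1 0 1 : ℂ)) / ((γ.1 1 0 : ℂ) * τ + (γ.1 1 1 : ℂ))

/-! For `Im τ ≥ 2` we have `|q| ≤ e^{-12} < 10⁻⁵`. Since `σ_k(n) ≤ n^{k+1} ≤ 64^{n-1}` for
`k ≤ 5`, every divisor series `∑ σ_k(n) qⁿ` is `q` up to `65|q|²`. Hence `E₂, E₄, E₆` are `1`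
up to `O(|q|)`, and since the linear terms `720q` of `E₄³` and `-1008q` of `E₆²` combine to `1728q`,
`Δ` is `q` up to `320|q|²`. Writing `N/Δ - q⁻¹ = ((N - 1)q - (Δ - q))/(Δq)` for `N = E₂E₄E₆`
and `N = E₄E₆` then bounds both differences by about `1100`. -/

theorem sigma'_succ_le_pow (k n : ℕ) : sigma' k (n + 1) ≤ (2 ^ (k + 1)) ^ n :=
  calc sigma' k (n + 1) = ArithmeticFunction.sigma k (n + 1) := ArithmeticFunction.sigma_apply.symm
    _ ≤ (n + 1) ^ (k + 1) := ArithmeticFunction.sigma_le_pow_succ k (n + 1)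
    _ ≤ (2 ^ n) ^ (k + 1) := Nat.pow_le_pow_left Nat.lt_two_pow_self _
    _ = (2 ^ (k + 1)) ^ n := by rw [← pow_mul, ← pow_mul, mul_comm]

theorem norm_tsum_mul_pow_succ_sub_le {𝕜 : Type*} [NormedField 𝕜] [CompleteSpace 𝕜]
    {a : ℕ → 𝕜} {M : ℝ} (ha : ∀ n, ‖a n‖ ≤ M ^ n) {q : 𝕜} (hM : 0 ≤ M)
    (hq : M * ‖q‖ < 1) :
    ‖∑' n, a n * q ^ (n + 1) - a 0 * q‖ ≤ M * ‖q‖ ^ 2 / (1 - M * ‖q‖) := by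
  have hMq : 0 ≤ M * ‖q‖ := by positivity
  have hterm : ∀ n, ‖a n * q ^ (n + 1)‖ ≤ ‖q‖ * (M * ‖q‖) ^ n := fun n => by
    rw [norm_mul, norm_pow, mul_pow, pow_succ, mul_comm ‖q‖, ← mul_assoc]
    exact mul_le_mul_of_nonneg_right (mul_le_mul_of_nonneg_right (ha n) (by positivity))
      (norm_nonneg q)
  have hsum : Summable fun n => a n * q ^ (n + 1) :=
    .of_norm_bounded ((summable_geometric_of_lt_one hMq hq).mul_left _) hterm
  have htail : HasSum (fun n => M * ‖q‖ ^ 2 * (M * ‖q‖) ^ n)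
      (M * ‖q‖ ^ 2 / (1 - M * ‖q‖)) := by
    simpa [div_eq_mul_inv] using (hasSum_geometric_of_lt_one hMq hq).mul_left (M * ‖q‖ ^ 2)
  rw [hsum.tsum_eq_zero_add, zero_add, pow_one, add_sub_cancel_left]
  refine tsum_of_norm_bounded htail fun n => (hterm (n + 1)).trans_eq ?_
  ring

def divisorSeries (k : ℕ) (q : ℂ) : ℂ := ∑' n : ℕ, (sigma' k (n + 1) : ℂ) * q ^ (n + 1)

theorem norm_divisorSeries_sub_le {k : ℕ} (hk : k ≤ 5) {q : ℂ} (hq : 4160 * ‖q‖ ≤ 1) :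
    ‖divisorSeries k q - q‖ ≤ 65 * ‖q‖ ^ 2 := by
  have hcoeff : ∀ n, ‖(sigma' k (n + 1) : ℂ)‖ ≤ 64 ^ n := fun n => by
    rw [Complex.norm_natCast]
    have : (2 ^ (k + 1)) ^ n ≤ (2 ^ 6) ^ n :=
      Nat.pow_le_pow_left (Nat.pow_le_pow_right two_pos (by omega)) n
    exact_mod_cast (sigma'_succ_le_pow k n).trans this
  have h := norm_tsum_mul_pow_succ_sub_le hcoeff (by norm_num) (q := q) (by linarith)
  have hσ : (sigma' k 1 : ℂ) = 1 := by simp [sigma']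
  rw [hσ, one_mul] at h
  refine h.trans ?_
  rw [div_le_iff₀ (by linarith)]
  nlinarith [norm_nonneg q]

theorem norm_mul_sub_one_le {R : Type*} [NormedRing R] (x y : R) :
    ‖x * y - 1‖ ≤ ‖x - 1‖ + ‖y - 1‖ + ‖x - 1‖ * ‖y - 1‖ := by
  have h : x * y - 1 = (x - 1) + (y - 1) + (x - 1) * (y - 1) := by noncomm_ring
  rw [h]
  exact norm_add₃_le.trans (add_le_add le_rfl (norm_mul_le _ _))

theorem norm_div_sub_inv_le {𝕜 : Type*} [NormedField 𝕜] {N D q : 𝕜} {a d : ℝ} (hq : q ≠ 0)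
    (hN : ‖N - 1‖ ≤ a * ‖q‖) (hD : ‖D - q‖ ≤ d * ‖q‖ ^ 2) (hdq : d * ‖q‖ < 1) :
    ‖N / D - q⁻¹‖ ≤ (a + d) / (1 - d * ‖q‖) := by
  have hr : 0 < ‖q‖ := norm_pos_iff.mpr hq
  have hDlow : (1 - d * ‖q‖) * ‖q‖ ≤ ‖D‖ := by
    nlinarith [norm_sub_norm_le q D, norm_sub_rev D q]
  have hD0 : D ≠ 0 := norm_pos_iff.mp (lt_of_lt_of_le (by nlinarith) hDlow)
  have hnum : ‖(N - 1) * q - (D - q)‖ ≤ (a + d) * ‖q‖ ^ 2 := by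
    calc ‖(N - 1) * q - (D - q)‖ ≤ ‖N - 1‖ * ‖q‖ + ‖D - q‖ := by
          rw [← norm_mul]; exact norm_sub_le _ _
      _ ≤ (a + d) * ‖q‖ ^ 2 := by nlinarith
  have hkey : N / D - q⁻¹ = ((N - 1) * q - (D - q)) / (D * q) := by
    field_simp
    ring
  have had : 0 ≤ a + d := by
    have : 0 ≤ (a + d) * ‖q‖ ^ 2 := (norm_nonneg _).trans hnum
    exact nonneg_of_mul_nonneg_left this (by positivity)
  rw [hkey, norm_div, norm_mul, div_le_div_iff₀ (by positivity) (by linarith)]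
  calc ‖(N - 1) * q - (D - q)‖ * (1 - d * ‖q‖) ≤ (a + d) * ‖q‖ ^ 2 * (1 - d * ‖q‖) :=
        mul_le_mul_of_nonneg_right hnum (by linarith)
    _ = (a + d) * ((1 - d * ‖q‖) * ‖q‖ * ‖q‖) := by ring
    _ ≤ (a + d) * (‖D‖ * ‖q‖) := by gcongr

theorem norm_le_of_norm_sub_le_sq {b q : ℂ} (hq : ‖q‖ ≤ 1 / 10 ^ 5)
    (hb : ‖b - q‖ ≤ 65 * ‖q‖ ^ 2) : ‖b‖ ≤ 1001 / 1000 * ‖q‖ := by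
  nlinarith [norm_le_norm_add_norm_sub' b q, norm_nonneg q]

theorem norm_discriminant_sub_le {q b c : ℂ} (hq : ‖q‖ ≤ 1 / 10 ^ 5)
    (hb : ‖b - q‖ ≤ 65 * ‖q‖ ^ 2) (hc : ‖c - q‖ ≤ 65 * ‖q‖ ^ 2) :
    ‖((1 + 240 * b) ^ 3 - (1 - 504 * c) ^ 2) / 1728 - q‖ ≤ 320 * ‖q‖ ^ 2 := by
  have hb' := norm_le_of_norm_sub_le_sq hq hb
  have hc' := norm_le_of_norm_sub_le_sq hq hc
  have hexp : ((1 + 240 * b) ^ 3 - (1 - 504 * c) ^ 2) / 1728 - q =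
      (720 * (b - q) + 1008 * (c - q) + 172800 * b ^ 2 + 13824000 * b ^ 3
        - 254016 * c ^ 2) / 1728 := by ring
  have hb2 : ‖b‖ ^ 2 ≤ (1001 / 1000 * ‖q‖) ^ 2 := by gcongr
  have hb3 : ‖b‖ ^ 3 ≤ (1001 / 1000 * ‖q‖) ^ 3 := by gcongr
  have hc2 : ‖c‖ ^ 2 ≤ (1001 / 1000 * ‖q‖) ^ 2 := by gcongr
  have hq3 : ‖q‖ ^ 3 ≤ 1 / 10 ^ 5 * ‖q‖ ^ 2 := by
    rw [pow_succ']; exact mul_le_mul_of_nonneg_right hq (by positivity)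
  rw [hexp, norm_div, div_le_iff₀ (by norm_num)]
  calc _ ≤ ‖720 * (b - q) + 1008 * (c - q) + 172800 * b ^ 2 + 13824000 * b ^ 3‖
          + ‖254016 * c ^ 2‖ := norm_sub_le _ _
    _ ≤ 720 * ‖b - q‖ + 1008 * ‖c - q‖ + 172800 * ‖b‖ ^ 2 + 13824000 * ‖b‖ ^ 3
          + 254016 * ‖c‖ ^ 2 := by
        grw [norm_add₄_le]
        simp only [norm_mul, norm_pow, Complex.norm_ofNat, le_refl]
    _ ≤ 320 * ‖q‖ ^ 2 * ‖(1728 : ℂ)‖ := by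
        rw [Complex.norm_ofNat]
        nlinarith

theorem norm_qpar_le {τ : ℂ} (hτ : 2 ≤ τ.im) : ‖qpar τ‖ ≤ 1 / 10 ^ 5 := by
  have hre : (2 * Real.pi * I * τ).re = -(2 * Real.pi * τ.im) := by
    simp [Complex.mul_re, Complex.mul_im]
  have hexp12 : (10 : ℝ) ^ 5 ≤ Real.exp 12 :=
    calc (10 : ℝ) ^ 5 ≤ 2.7 ^ 12 := by norm_num
      _ ≤ Real.exp 1 ^ 12 := by gcongr; linarith [Real.exp_one_gt_d9]
      _ = Real.exp 12 := by rw [← Real.exp_nat_mul]; norm_num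
  rw [qpar, Complex.norm_exp, hre]
  calc Real.exp (-(2 * Real.pi * τ.im)) ≤ Real.exp (-12) :=
        Real.exp_le_exp.mpr (by nlinarith [Real.pi_gt_three])
    _ = (Real.exp 12)⁻¹ := Real.exp_neg 12
    _ ≤ 1 / 10 ^ 5 := by rw [one_div]; exact inv_anti₀ (by positivity) hexp12

theorem norm_divisorSeries_qpar_sub_le {k : ℕ} (hk : k ≤ 5) {τ : ℂ} (hτ : 2 ≤ τ.im) :
    ‖divisorSeries k (qpar τ) - qpar τ‖ ≤ 65 * ‖qpar τ‖ ^ 2 :=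
  norm_divisorSeries_sub_le hk (by linarith [norm_qpar_le hτ])

theorem norm_eisenstein_sub_one_le {τ : ℂ} (hτ : 2 ≤ τ.im) :
    ‖E2 τ - 1‖ ≤ 25 * ‖qpar τ‖ ∧ ‖E4 τ - 1‖ ≤ 241 * ‖qpar τ‖ ∧
      ‖E6 τ - 1‖ ≤ 505 * ‖qpar τ‖ := by
  have hS : ∀ k ≤ 5, ‖divisorSeries k (qpar τ)‖ ≤ 1001 / 1000 * ‖qpar τ‖ := fun k hk =>
    norm_le_of_norm_sub_le_sq (norm_qpar_le hτ) (norm_divisorSeries_qpar_sub_le hk hτ)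
  have hr := norm_nonneg (qpar τ)
  refine ⟨?_, ?_, ?_⟩
  · have h : E2 τ - 1 = -(24 * divisorSeries 1 (qpar τ)) := by rw [E2, divisorSeries]; ring
    rw [h, norm_neg, norm_mul, Complex.norm_ofNat]
    linarith [hS 1 (by norm_num)]
  · have h : E4 τ - 1 = 240 * divisorSeries 3 (qpar τ) := by rw [E4, divisorSeries]; ring
    rw [h, norm_mul, Complex.norm_ofNat]
    linarith [hS 3 (by norm_num)]
  · have h : E6 τ - 1 = -(504 * divisorSeries 5 (qpar τ)) := by rw [E6, divisorSeries]; ring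
    rw [h, norm_neg, norm_mul, Complex.norm_ofNat]
    linarith [hS 5 le_rfl]

theorem norm_Δ'_sub_qpar_le {τ : ℂ} (hτ : 2 ≤ τ.im) :
    ‖Δ' τ - qpar τ‖ ≤ 320 * ‖qpar τ‖ ^ 2 :=
  norm_discriminant_sub_le (norm_qpar_le hτ) (norm_divisorSeries_qpar_sub_le (by norm_num) hτ)
    (norm_divisorSeries_qpar_sub_le le_rfl hτ)

/-- For `Im τ ≥ 2`, `|χ(τ) - q⁻¹| ≤ 4808` and `|ξ(τ) - q⁻¹| ≤ 4782`. -/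
theorem strong_chi_xi_tail_bounds (τ : ℂ) (hτ : 2 ≤ τ.im) :
    ‖χ' τ - (qpar τ)⁻¹‖ ≤ 4808 ∧
    ‖ξ' τ - (qpar τ)⁻¹‖ ≤ 4782 := by
  have hq := norm_qpar_le hτ
  have hr := norm_nonneg (qpar τ)
  have hr2 := mul_le_mul_of_nonneg_left hq hr
  obtain ⟨h2, h4, h6⟩ := norm_eisenstein_sub_one_le hτ
  have h46 : ‖E4 τ * E6 τ - 1‖ ≤ 748 * ‖qpar τ‖ := by
    nlinarith [norm_mul_sub_one_le (E4 τ) (E6 τ), mul_le_mul h4 h6 (norm_nonneg _) (by positivity)]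
  have h246 : ‖E2 τ * E4 τ * E6 τ - 1‖ ≤ 774 * ‖qpar τ‖ := by
    rw [mul_assoc]
    nlinarith [norm_mul_sub_one_le (E2 τ) (E4 τ * E6 τ),
      mul_le_mul h2 h46 (norm_nonneg _) (by positivity)]
  have hΔ := norm_Δ'_sub_qpar_le hτ
  have hsmall : 320 * ‖qpar τ‖ < 1 := by linarith
  have hq0 : qpar τ ≠ 0 := Complex.exp_ne_zero _
  constructor
  · refine (norm_div_sub_inv_le hq0 h246 hΔ hsmall).trans ?_
    rw [div_le_iff₀ (by linarith)]
    linarith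
  · refine (norm_div_sub_inv_le hq0 h46 hΔ hsmall).trans ?_
    rw [div_le_iff₀ (by linarith)]
    linarith
end
end

section
/- For every τ in the upper half-plane with Im τ ≥ √3/2, one has |(E₂(τ) − 1)/q| < 25, where q = e^{2πiτ}. -/
open Complex

noncomputable section

/-!
For `Im τ ≥ √3/2` we have `|q| = e^{-2π Im τ} ≤ e^{-π√3} < 1/100`, and `σ₁(n+1) ≤ (n+1)² ≤ 3ⁿ`,
so `(E₂ - 1)/q = -24 ∑ σ₁(n+1) qⁿ` is dominated by `24 ∑ (3/100)ⁿ = 2400/97 < 25`.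
-/

lemma norm_qpar (τ : ℂ) : ‖qpar τ‖ = Real.exp (-(2 * Real.pi * τ.im)) := by
  simp [qpar, Complex.norm_exp, Complex.mul_re]

lemma hundred_le_exp_pi_mul_sqrt_three : (100 : ℝ) ≤ Real.exp (Real.pi * Real.sqrt 3) := by
  have hsqrt : (1.7 : ℝ) ≤ Real.sqrt 3 := Real.le_sqrt_of_sq_le (by norm_num)
  have hpi : (3 : ℝ) ≤ Real.pi := Real.pi_gt_three.le
  have he : (2.7 : ℝ) ≤ Real.exp 1 := by linarith [Real.exp_one_gt_d9]
  calc (100 : ℝ) ≤ 2.7 ^ 5 := by norm_num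
    _ ≤ Real.exp 1 ^ 5 := pow_le_pow_left₀ (by norm_num) he 5
    _ = Real.exp 5 := by rw [← Real.exp_nat_mul]; norm_num
    _ ≤ Real.exp (Real.pi * Real.sqrt 3) := Real.exp_le_exp.mpr (by nlinarith)

lemma norm_qpar_le_of_sqrt_three_div_two_le_im {τ : ℂ} (hτ : Real.sqrt 3 / 2 ≤ τ.im) :
    ‖qpar τ‖ ≤ 1 / 100 := by
  have hexp : Real.exp (Real.pi * Real.sqrt 3) ≤ Real.exp (2 * Real.pi * τ.im) :=
    Real.exp_le_exp.mpr (by nlinarith [Real.pi_pos])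
  rw [norm_qpar, Real.exp_neg, one_div]
  exact inv_anti₀ (by norm_num) (hundred_le_exp_pi_mul_sqrt_three.trans hexp)

lemma sigma'_one_le_sq (m : ℕ) : sigma' 1 m ≤ m ^ 2 :=
  calc sigma' 1 m ≤ ∑ _d ∈ m.divisors, m :=
        Finset.sum_le_sum fun d hd => by simpa using Nat.divisor_le hd
    _ = m.divisors.card * m := by rw [Finset.sum_const, smul_eq_mul]
    _ ≤ m * m := Nat.mul_le_mul_right m (Nat.card_divisors_le_self m)
    _ = m ^ 2 := (sq m).symm

lemma succ_sq_le_three_pow {n : ℕ} (hn : 2 ≤ n) : (n + 1) ^ 2 ≤ 3 ^ n := by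
  induction n, hn using Nat.le_induction with
  | base => norm_num
  | succ k hk ih => rw [pow_succ 3]; nlinarith

lemma sigma'_one_succ_le_three_pow (n : ℕ) : sigma' 1 (n + 1) ≤ 3 ^ n := by
  rcases Nat.lt_or_ge n 2 with hn | hn
  · interval_cases n <;> decide
  · exact (sigma'_one_le_sq _).trans (succ_sq_le_three_pow hn)

lemma E2_sub_one_div_qpar (τ : ℂ) :
    (E2 τ - 1) / qpar τ = -24 * ∑' n : ℕ, (sigma' 1 (n + 1) : ℂ) * qpar τ ^ n := by
  have hq : qpar τ ≠ 0 := Complex.exp_ne_zero _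
  have hshift : ∑' n : ℕ, (sigma' 1 (n + 1) : ℂ) * qpar τ ^ (n + 1)
      = (∑' n : ℕ, (sigma' 1 (n + 1) : ℂ) * qpar τ ^ n) * qpar τ := by
    rw [← tsum_mul_right]
    exact tsum_congr fun n => by rw [pow_succ, mul_assoc]
  rw [E2, hshift]
  field_simp
  ring

/-- For `Im τ ≥ √3/2`, `|(E₂(τ) - 1)/q| < 25`. -/
theorem E2_tail_bound (τ : ℂ) (hτ : Real.sqrt 3 / 2 ≤ τ.im) :
    ‖(E2 τ - 1) / qpar τ‖ < 25 := by
  have hq := norm_qpar_le_of_sqrt_three_div_two_le_im hτ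
  have hterm : ∀ n : ℕ, ‖(sigma' 1 (n + 1) : ℂ) * qpar τ ^ n‖ ≤ (3 / 100 : ℝ) ^ n := by
    intro n
    rw [norm_mul, norm_pow, Complex.norm_natCast, div_eq_mul_one_div, mul_pow]
    gcongr
    exact_mod_cast sigma'_one_succ_le_three_pow n
  have hsum : ‖∑' n : ℕ, (sigma' 1 (n + 1) : ℂ) * qpar τ ^ n‖ ≤ (1 - 3 / 100 : ℝ)⁻¹ :=
    tsum_of_norm_bounded (hasSum_geometric_of_lt_one (by norm_num) (by norm_num)) hterm
  rw [E2_sub_one_div_qpar, norm_mul, norm_neg, Complex.norm_ofNat]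
  calc 24 * ‖∑' n : ℕ, (sigma' 1 (n + 1) : ℂ) * qpar τ ^ n‖ ≤ 24 * (1 - 3 / 100 : ℝ)⁻¹ := by
        gcongr
    _ < 25 := by norm_num
end
end

section
/- For every τ in the upper half-plane with Im τ ≥ √3/2, one has |(E₄(τ) − 1)/q| < 252, where q = e^{2πiτ}. -/
open Complex

noncomputable section

/-! With `r = ‖q‖ ≤ e^{-π√3} < 1/200` we have `‖(E₄ - 1)/q‖ ≤ 240 ∑ σ₃(n+1) rⁿ`. The terms
`n = 0, 1` contribute exactly `1 + 9r`; the crude bound `σ₃(2) ≤ 2⁴` would already use up the whole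
margin `252/240 - 1`. For the rest, `σ₃(n+3) ≤ (n+3)⁴ ≤ 81·4ⁿ` gives the geometric majorant
`81r²/(1 - 4r)`. -/

open ArithmeticFunction in
open scoped ArithmeticFunction.sigma in
lemma sigma'_eq_sigma (k n : ℕ) : sigma' k n = σ k n := sigma_apply.symm

lemma sigma'_le_pow_succ (k n : ℕ) : sigma' k n ≤ n ^ (k + 1) := by
  simpa only [sigma'_eq_sigma] using ArithmeticFunction.sigma_le_pow_succ k n

lemma sigma'_three_one : sigma' 3 1 = 1 := by decide

lemma sigma'_three_two : sigma' 3 2 = 9 := by decide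

lemma add_three_pow_four_le (n : ℕ) : (n + 3) ^ 4 ≤ 81 * 4 ^ n := by
  induction n with
  | zero => norm_num
  | succ n ih =>
    have hstep : 81 * (n + 4) ^ 4 ≤ 256 * (n + 3) ^ 4 := by
      simpa [mul_pow] using Nat.pow_le_pow_left (show 3 * (n + 4) ≤ 4 * (n + 3) by omega) 4
    rw [show n + 1 + 3 = n + 4 by omega, pow_succ 4 n]
    omega

lemma sigma'_three_mul_pow_add_two_le {r : ℝ} (hr : 0 ≤ r) (n : ℕ) :
    (sigma' 3 (n + 2 + 1) : ℝ) * r ^ (n + 2) ≤ 81 * r ^ 2 * (4 * r) ^ n := by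
  have h : (sigma' 3 (n + 3) : ℝ) ≤ 81 * 4 ^ n := by
    exact_mod_cast (sigma'_le_pow_succ 3 _).trans (add_three_pow_four_le n)
  calc (sigma' 3 (n + 3) : ℝ) * r ^ (n + 2) ≤ 81 * 4 ^ n * r ^ (n + 2) := by gcongr
    _ = 81 * r ^ 2 * (4 * r) ^ n := by ring

lemma summable_sigma'_three_mul_pow {r : ℝ} (hr : 0 ≤ r) (hr4 : r < 1 / 4) :
    Summable fun n : ℕ => (sigma' 3 (n + 1) : ℝ) * r ^ n :=
  (summable_nat_add_iff 2).mp <| .of_nonneg_of_le (fun n => by positivity)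
    (sigma'_three_mul_pow_add_two_le hr)
    ((summable_geometric_of_lt_one (by positivity) (by linarith)).mul_left _)

lemma tsum_sigma'_three_mul_pow_le {r : ℝ} (hr : 0 ≤ r) (hr4 : r < 1 / 4) :
    ∑' n : ℕ, (sigma' 3 (n + 1) : ℝ) * r ^ n ≤ 1 + 9 * r + 81 * r ^ 2 / (1 - 4 * r) := by
  have hsum := summable_sigma'_three_mul_pow hr hr4
  have htail : ∑' n : ℕ, (sigma' 3 (n + 2 + 1) : ℝ) * r ^ (n + 2) ≤ 81 * r ^ 2 / (1 - 4 * r) :=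
    calc ∑' n : ℕ, (sigma' 3 (n + 2 + 1) : ℝ) * r ^ (n + 2)
        ≤ ∑' n : ℕ, 81 * r ^ 2 * (4 * r) ^ n :=
          ((summable_nat_add_iff 2).mpr hsum).tsum_le_tsum (sigma'_three_mul_pow_add_two_le hr)
            ((summable_geometric_of_lt_one (by positivity) (by linarith)).mul_left _)
      _ = 81 * r ^ 2 / (1 - 4 * r) := by
          rw [tsum_mul_left, tsum_geometric_of_lt_one (by positivity) (by linarith), div_eq_mul_inv]
  rw [← hsum.sum_add_tsum_nat_add 2]
  simpa [Finset.sum_range_succ, sigma'_three_one, sigma'_three_two] using htail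

lemma two_hundred_lt_exp_pi_mul_sqrt_three : (200 : ℝ) < Real.exp (Real.pi * Real.sqrt 3) := by
  have hsqrt : (1.73 : ℝ) ≤ Real.sqrt 3 := Real.le_sqrt_of_sq_le (by norm_num)
  have hexp : (200 : ℝ) < Real.exp 5.4 := by
    have h5 : (2.718 : ℝ) ^ 5 < Real.exp 1 ^ 5 := by
      gcongr; exact lt_trans (by norm_num) Real.exp_one_gt_d9
    have h04 : (1.4 : ℝ) ≤ Real.exp 0.4 := by linarith [Real.add_one_le_exp (0.4 : ℝ)]
    calc (200 : ℝ) < 2.718 ^ 5 * 1.4 := by norm_num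
      _ ≤ Real.exp 1 ^ 5 * Real.exp 0.4 := by gcongr
      _ = Real.exp 5.4 := by rw [← Real.exp_nat_mul, ← Real.exp_add]; norm_num
  refine hexp.trans_le (Real.exp_le_exp.mpr ?_)
  nlinarith [Real.pi_gt_d2]

lemma norm_qpar_lt_of_sqrt_three_div_two_le_im {τ : ℂ} (hτ : Real.sqrt 3 / 2 ≤ τ.im) :
    ‖qpar τ‖ < 1 / 200 := by
  rw [norm_qpar, one_div, lt_inv_comm₀ (Real.exp_pos _) (by norm_num), ← Real.exp_neg, neg_neg]
  refine two_hundred_lt_exp_pi_mul_sqrt_three.trans_le (Real.exp_le_exp.mpr ?_)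
  nlinarith [Real.pi_pos]

lemma E4_sub_one_div_qpar (τ : ℂ) :
    (E4 τ - 1) / qpar τ = 240 * ∑' n : ℕ, (sigma' 3 (n + 1) : ℂ) * qpar τ ^ n := by
  have hq : qpar τ ≠ 0 := Complex.exp_ne_zero _
  rw [E4, add_sub_cancel_left, mul_div_assoc, ← tsum_div_const]
  refine congrArg _ (tsum_congr fun n => ?_)
  rw [pow_succ, ← mul_assoc, mul_div_cancel_right₀ _ hq]

lemma norm_E4_sub_one_div_qpar_le {τ : ℂ} (hq : ‖qpar τ‖ < 1 / 4) :
    ‖(E4 τ - 1) / qpar τ‖ ≤ 240 * ∑' n : ℕ, (sigma' 3 (n + 1) : ℝ) * ‖qpar τ‖ ^ n := by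
  have hnorm (n : ℕ) :
      ‖(sigma' 3 (n + 1) : ℂ) * qpar τ ^ n‖ = sigma' 3 (n + 1) * ‖qpar τ‖ ^ n := by
    simp
  rw [E4_sub_one_div_qpar, norm_mul, RCLike.norm_ofNat, ← funext hnorm]
  gcongr
  refine norm_tsum_le_tsum_norm ?_
  simpa only [hnorm] using summable_sigma'_three_mul_pow (norm_nonneg _) hq

lemma E4_majorant_lt {r : ℝ} (hr : 0 ≤ r) (hr200 : r < 1 / 200) :
    240 * (1 + 9 * r + 81 * r ^ 2 / (1 - 4 * r)) < 252 := by
  have h : 81 * r ^ 2 / (1 - 4 * r) ≤ 162 * r ^ 2 := by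
    rw [div_le_iff₀ (by linarith)]; nlinarith
  nlinarith

/-- For `Im τ ≥ √3/2`, `|(E₄(τ) - 1)/q| < 252`. -/
theorem E4_tail_bound (τ : ℂ) (hτ : Real.sqrt 3 / 2 ≤ τ.im) :
    ‖(E4 τ - 1) / qpar τ‖ < 252 := by
  have hr := norm_qpar_lt_of_sqrt_three_div_two_le_im hτ
  have hr0 : 0 ≤ ‖qpar τ‖ := norm_nonneg _
  calc ‖(E4 τ - 1) / qpar τ‖
      ≤ 240 * ∑' n : ℕ, (sigma' 3 (n + 1) : ℝ) * ‖qpar τ‖ ^ n :=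
        norm_E4_sub_one_div_qpar_le (by linarith)
    _ ≤ 240 * (1 + 9 * ‖qpar τ‖ + 81 * ‖qpar τ‖ ^ 2 / (1 - 4 * ‖qpar τ‖)) := by
        gcongr; exact tsum_sigma'_three_mul_pow_le hr0 (by linarith)
    _ < 252 := E4_majorant_lt hr0 hr
end
end

section
/- For every τ in the upper half-plane with Im τ ≥ 1.5, one has |(Δ(τ) − q)/q²| < 3700, where q = e^{2πiτ}. -/
open Complex

noncomputable section

/-! Write `A = ∑ σ₃(n)qⁿ` and `B = ∑ σ₅(n)qⁿ`, so that `E₄ = 1 + 240A` and `E₆ = 1 - 504B`.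
Since `σ_k(n) ≤ n^(k+1) ≤ 2^((k+1)n)`, both series are dominated by geometric series, and
`|A - q|`, `|B - q|` are `O(|q|²)` with explicit constants as soon as `|q| ≤ e^(-3π) < 1/8000`.
Expanding, `Δ - q = (5(A - q) + 7(B - q))/12 + 100A² + 8000A³ - 147B²`, and every term on the
right is at most a small multiple of `|q|²`. -/

open ArithmeticFunction in
lemma sigma'_le_pow (k n : ℕ) : (sigma' k n : ℝ) ≤ (2 ^ (k + 1)) ^ n := by
  have hσ : sigma' k n ≤ n ^ (k + 1) := by
    rw [sigma', ← sigma_apply]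
    exact sigma_le_pow_succ k n
  have hn : n ^ (k + 1) ≤ (2 ^ (k + 1)) ^ n := by
    rw [← pow_mul, mul_comm, pow_mul]
    exact Nat.pow_le_pow_left Nat.lt_two_pow_self.le _
  exact_mod_cast hσ.trans hn

lemma norm_sigma'_mul_pow_le (k n : ℕ) (q : ℂ) :
    ‖(sigma' k n : ℂ) * q ^ n‖ ≤ (2 ^ (k + 1) * ‖q‖) ^ n := by
  rw [norm_mul, norm_pow, Complex.norm_natCast, mul_pow]
  gcongr
  exact sigma'_le_pow k n

def sigmaQSeries (k : ℕ) (q : ℂ) : ℂ := ∑' n : ℕ, (sigma' k (n + 1) : ℂ) * q ^ (n + 1)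

lemma norm_sub_sigmaQSeries_le (k : ℕ) {q : ℂ} (hq : 2 ^ (k + 1) * ‖q‖ < 1) :
    ‖q - sigmaQSeries k q‖ ≤ (2 ^ (k + 1) * ‖q‖) ^ 2 / (1 - 2 ^ (k + 1) * ‖q‖) := by
  rw [sigmaQSeries]
  set c : ℝ := 2 ^ (k + 1) * ‖q‖
  set f : ℕ → ℂ := fun n ↦ (sigma' k (n + 1) : ℂ) * q ^ (n + 1)
  have hf : ∀ n, ‖f n‖ ≤ c * c ^ n := fun n ↦
    (norm_sigma'_mul_pow_le k (n + 1) q).trans_eq (pow_succ' c n)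
  have hsum : Summable f :=
    .of_norm_bounded ((summable_geometric_of_lt_one (by positivity) hq).mul_left c) hf
  have hf0 : f 0 = q := by simp [f, sigma']
  simpa [hf0, sq] using norm_sub_le_of_geometric_bound_of_hasSum hq hf hsum.hasSum 1

lemma norm_qpar_le_of_three_halves_le_im {τ : ℂ} (hτ : 3 / 2 ≤ τ.im) :
    ‖qpar τ‖ ≤ 1 / 8000 := by
  have hexp9 : (8000 : ℝ) ≤ Real.exp 9 :=
    calc (8000 : ℝ) ≤ 2.7182818283 ^ 9 := by norm_num
      _ ≤ Real.exp 1 ^ 9 := by gcongr; exact Real.exp_one_gt_d9.le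
      _ = Real.exp 9 := by rw [← Real.exp_nat_mul]; norm_num
  calc ‖qpar τ‖ ≤ Real.exp (-9) := by
        rw [norm_qpar]; gcongr; nlinarith [Real.pi_gt_three]
    _ ≤ 1 / 8000 := by rw [Real.exp_neg, one_div]; gcongr

lemma norm_disc_poly_sub_le (q A B : ℂ) :
    ‖((1 + 240 * A) ^ 3 - (1 - 504 * B) ^ 2) / 1728 - q‖ ≤
      (5 * ‖A - q‖ + 7 * ‖B - q‖) / 12 + 100 * ‖A‖ ^ 2 + 8000 * ‖A‖ ^ 3 + 147 * ‖B‖ ^ 2 := by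
  have hlin := norm_add_le (5 * (A - q)) (7 * (B - q))
  have hsum3 := norm_add₃_le (a := (5 * (A - q) + 7 * (B - q)) / 12) (b := 100 * A ^ 2)
    (c := 8000 * A ^ 3)
  have hsum := norm_sub_le ((5 * (A - q) + 7 * (B - q)) / 12 + 100 * A ^ 2 + 8000 * A ^ 3)
    (147 * B ^ 2)
  simp only [norm_mul, norm_div, norm_pow, Complex.norm_ofNat] at hlin hsum3 hsum
  calc ‖((1 + 240 * A) ^ 3 - (1 - 504 * B) ^ 2) / 1728 - q‖
      = ‖(5 * (A - q) + 7 * (B - q)) / 12 + 100 * A ^ 2 + 8000 * A ^ 3 - 147 * B ^ 2‖ := by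
        congr 1; ring
    _ ≤ _ := by linarith

lemma norm_disc_poly_sub_lt {q A B : ℂ} (hq0 : q ≠ 0) (hq : ‖q‖ ≤ 1 / 8000)
    (hA : ‖q - A‖ ≤ (2 ^ 4 * ‖q‖) ^ 2 / (1 - 2 ^ 4 * ‖q‖))
    (hB : ‖q - B‖ ≤ (2 ^ 6 * ‖q‖) ^ 2 / (1 - 2 ^ 6 * ‖q‖)) :
    ‖((1 + 240 * A) ^ 3 - (1 - 504 * B) ^ 2) / 1728 - q‖ < 3700 * ‖q‖ ^ 2 := by
  set r := ‖q‖
  have hr : 0 < r := norm_pos_iff.mpr hq0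
  have hA' : ‖A - q‖ ≤ 260 * r ^ 2 := by
    rw [norm_sub_rev]
    refine hA.trans ?_
    rw [div_le_iff₀ (by linarith)]
    nlinarith
  have hB' : ‖B - q‖ ≤ 4200 * r ^ 2 := by
    rw [norm_sub_rev]
    refine hB.trans ?_
    rw [div_le_iff₀ (by linarith)]
    nlinarith
  have hAn : ‖A‖ ≤ 2 * r := by
    have := norm_le_norm_add_norm_sub' A q
    nlinarith
  have hBn : ‖B‖ ≤ 2 * r := by
    have := norm_le_norm_add_norm_sub' B q
    nlinarith
  calc ‖((1 + 240 * A) ^ 3 - (1 - 504 * B) ^ 2) / 1728 - q‖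
      ≤ (5 * ‖A - q‖ + 7 * ‖B - q‖) / 12 + 100 * ‖A‖ ^ 2 + 8000 * ‖A‖ ^ 3
          + 147 * ‖B‖ ^ 2 := norm_disc_poly_sub_le q A B
    _ < 3700 * r ^ 2 := by
        have hA2 := pow_le_pow_left₀ (norm_nonneg A) hAn 2
        have hA3 := pow_le_pow_left₀ (norm_nonneg A) hAn 3
        have hB2 := pow_le_pow_left₀ (norm_nonneg B) hBn 2
        nlinarith

/-- For `Im τ ≥ 1.5`, `|(Δ(τ) - q)/q²| < 3700`. -/
theorem disc_tail_bound_medium (τ : ℂ) (hτ : 1.5 ≤ τ.im) :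
    ‖(Δ' τ - qpar τ) / qpar τ ^ 2‖ < 3700 := by
  have hq0 : qpar τ ≠ 0 := Complex.exp_ne_zero _
  have hq : ‖qpar τ‖ ≤ 1 / 8000 := norm_qpar_le_of_three_halves_le_im (le_trans (by norm_num) hτ)
  rw [norm_div, norm_pow, div_lt_iff₀ (by positivity)]
  exact norm_disc_poly_sub_lt hq0 hq (norm_sub_sigmaQSeries_le 3 (by norm_num; linarith))
    (norm_sub_sigmaQSeries_le 5 (by norm_num; linarith))
end
end
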